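/- arXiv:1808.08452 — 6 statements merged into one kernel-verified Lean document; each statement's English description precedes it below -/
import Mathlib

section
/- Let D be a division ring and let N be a normal subgroup of the multiplicative group D* of D. If N is non-central (i.e., N is not contained in the center of D), then the centralizer of N in D equals the center F of D. -/
/-- If a normal subgroup `N` of the multiplicative group of a division ring `D` is
non-central, then the centralizer of `N` in `D` is the center of `D`. -/
theorem centralizer_of_noncentral_normal_subgroup_eq_center
    {D : Type*} [DivisionRing D] (N : Subgroup Dˣ) (hNnorm : N.Normal)
    (hN : ∃ u ∈ N, (u : D) ∉ Subring.center D) :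
    {x : D | ∀ u ∈ N, x * (u : D) = (u : D) * x} = (Subring.center D : Set D) := by
  set S : Set D := {x : D | ∀ u ∈ N, x * (u : D) = (u : D) * x} with hSdef
  have hsub : ∀ a b, a ∈ S → b ∈ S → a - b ∈ S := by
    intro a b ha hb u hu
    rw [sub_mul, mul_sub, ha u hu, hb u hu]
  have hmul : ∀ a b, a ∈ S → b ∈ S → a * b ∈ S := by
    intro a b ha hb u hu
    rw [mul_assoc, hb u hu, ← mul_assoc, ha u hu, mul_assoc]
  have hinv : ∀ a, a ∈ S → a⁻¹ ∈ S := by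
    intro a ha u hu
    rcases eq_or_ne a 0 with rfl | h0
    · simp
    · calc a⁻¹ * (u : D) = a⁻¹ * ((u : D) * a) * a⁻¹ := by
            rw [mul_assoc, mul_assoc, mul_inv_cancel₀ h0, mul_one]
        _ = a⁻¹ * (a * (u : D)) * a⁻¹ := by rw [ha u hu]
        _ = (u : D) * a⁻¹ := by rw [← mul_assoc, inv_mul_cancel₀ h0, one_mul]
  have hneg : (-1 : D) ∈ S := by intro u hu; simp
  -- conjugation invariance
  have hconj : ∀ a ∈ S, ∀ b : D, b ≠ 0 → b * a * b⁻¹ ∈ S := by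
    intro a ha b hb u hu
    lift b to Dˣ using isUnit_iff_ne_zero.mpr hb with bu hbu
    have hmem : (bu⁻¹ * u * bu : Dˣ) ∈ N := by
      have := hNnorm.conj_mem u hu bu⁻¹
      simpa [mul_assoc] using this
    have key := ha _ hmem
    push_cast at key
    have hb' : (bu : D) ≠ 0 := bu.ne_zero
    calc (bu : D) * a * (bu : D)⁻¹ * u
        = (bu : D) * (a * ((bu : D)⁻¹ * u * bu)) * (bu : D)⁻¹ := by
          simp only [mul_assoc, mul_inv_cancel₀ hb', mul_one]
      _ = (bu : D) * (((bu : D)⁻¹ * u * bu) * a) * (bu : D)⁻¹ := by rw [key]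
      _ = (u : D) * ((bu : D) * a * (bu : D)⁻¹) := by
          simp only [mul_assoc]
          rw [← mul_assoc, mul_inv_cancel₀ hb', one_mul]
  -- some element not in S
  obtain ⟨u₀, hu₀N, hu₀⟩ := hN
  rw [Subring.mem_center_iff] at hu₀
  push_neg at hu₀
  obtain ⟨t, ht⟩ := hu₀
  have htS : t ∉ S := fun h => ht (h u₀ hu₀N)
  -- key: a ∈ S, b ∉ S ⟹ a * b = b * a
  have key : ∀ a ∈ S, ∀ b : D, b ∉ S → a * b = b * a := by
    intro a ha b hb
    have hb0 : b ≠ 0 := by rintro rfl; exact hb (by intro u hu; simp)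
    have hb1 : (1 : D) + b ≠ 0 := by
      intro h
      have hbn : b = -1 := (neg_eq_of_add_eq_zero_right h).symm
      exact hb (hbn ▸ hneg)
    set c := b * a * b⁻¹ with hc
    set c' := (1 + b) * a * (1 + b)⁻¹ with hc'
    have hcS : c ∈ S := hconj a ha b hb0
    have hc'S : c' ∈ S := hconj a ha (1 + b) hb1
    have e1 : c * b = b * a := by
      rw [hc, mul_assoc, inv_mul_cancel₀ hb0, mul_one]
    have e2 : c' * (1 + b) = (1 + b) * a := by
      rw [hc', mul_assoc, inv_mul_cancel₀ hb1, mul_one]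
    have e2' : c' + c' * b = a + b * a := by
      have := e2; rwa [mul_add, mul_one, add_mul, one_mul] at this
    have hcb : c' * b = a + b * a - c' := eq_sub_of_add_eq' e2'
    have e3 : (c' - c) * b = a - c' := by
      rw [sub_mul, e1, hcb]; abel
    by_cases hcc : c' = c
    · have ha' : a = c' := by
        have h0 := e3
        rw [hcc, sub_self, zero_mul] at h0
        rw [hcc]
        exact sub_eq_zero.mp h0.symm
      have h2 := e2
      rw [← ha', mul_add, add_mul, mul_one, one_mul] at h2
      exact add_left_cancel h2
    · exfalso
      have hd : c' - c ≠ 0 := sub_ne_zero.mpr hcc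
      have hbS : b = (c' - c)⁻¹ * (a - c') := by
        rw [← e3, ← mul_assoc, inv_mul_cancel₀ hd, one_mul]
      exact hb (hbS ▸ hmul _ _ (hinv _ (hsub _ _ hc'S hcS)) (hsub _ _ ha hc'S))
  ext x
  constructor
  · intro hx
    rw [Set.mem_setOf_eq] at hx
    show x ∈ Subring.center D
    rw [Subring.mem_center_iff]
    intro g
    by_cases hg : g ∈ S
    · have hgt : g + t ∉ S := fun h => htS (by simpa using hsub _ _ h hg)
      have h1 := key x hx t htS
      have h2 := key x hx (g + t) hgt
      rw [mul_add, add_mul, h1] at h2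
      exact (add_right_cancel h2).symm
    · exact (key x hx g hg).symm
  · intro hx u hu
    exact (Subring.mem_center_iff.mp hx u).symm
end

section
/- Let D be a division ring with center F, let K be a division subring of D containing F, and let a ∈ D. Suppose α_1, …, α_n are pairwise distinct elements of F such that a − α_i ≠ 0 for every i. Then either a is left algebraic over K, or the set {(a − α_1)^{-1}, …, (a − α_n)^{-1}} is left linearly independent over K (i.e., whenever β_1, …, β_n ∈ K satisfy β_1(a − α_1)^{-1} + ⋯ + β_n(a − α_n)^{-1} = 0, all β_i = 0). -/
/-- `a` is left algebraic over the division subring `K` of `D`: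
there are coefficients `a_0, …, a_m ∈ K`, not all zero, with
`a_0 + a_1·a + ⋯ + a_m·a^m = 0`. -/
def IsLeftAlgebraicOver {D : Type*} [DivisionRing D] (K : Subring D) (a : D) : Prop :=
  ∃ (m : ℕ) (c : ℕ → D), (∀ i, c i ∈ K) ∧ (∃ i ≤ m, c i ≠ 0) ∧
    ∑ i ∈ Finset.range (m + 1), c i * a ^ i = 0

open Polynomial

/-- Let `D` be a division ring with center `F`, `K` a division subring of `D` containing `F`,
and `a ∈ D`.  If `α_1, …, α_n` are pairwise distinct central elements with `a - α_i ≠ 0`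
for all `i`, then either `a` is left algebraic over `K` or the family
`{(a - α_i)⁻¹}` is left linearly independent over `K`. -/
theorem left_algebraic_or_inverses_left_linearIndependent
    {D : Type*} [DivisionRing D] (K : Subring D)
    (hKinv : ∀ x ∈ K, x⁻¹ ∈ K) (hFK : Subring.center D ≤ K)
    (a : D) (n : ℕ) (α : Fin n → D) (hαF : ∀ i, α i ∈ Subring.center D)
    (hα : Function.Injective α) (ha : ∀ i, a - α i ≠ 0) :
    IsLeftAlgebraicOver K a ∨
      ∀ β : Fin n → D, (∀ i, β i ∈ K) →
        ∑ i, β i * (a - α i)⁻¹ = 0 → ∀ i, β i = 0 := by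
  refine or_iff_not_imp_right.2 fun h => ?_
  push_neg at h
  obtain ⟨β, hβK, hrel, i0, hβ0⟩ := h
  set F := Subring.center D with hF
  have hCoe : ∀ (c : F), algebraMap F D c = (c : D) := fun _ => rfl
  set α' : Fin n → F := fun i => ⟨α i, hαF i⟩ with hα'
  have hα'inj : Function.Injective α' := fun i j hij => hα (congrArg Subtype.val hij)
  obtain ⟨m, rfl⟩ : ∃ m, n = m + 1 := ⟨n - 1, by
    have : n ≠ 0 := fun hn => (hn ▸ i0).elim0
    omega⟩
  set p : Fin (m + 1) → F[X] := fun i => ∏ j ∈ Finset.univ.erase i, (X - C (α' j)) with hp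
  have hdeg : ∀ i, (p i).natDegree < m + 1 := by
    intro i
    rw [hp]
    refine Nat.lt_succ_of_le (le_trans (Polynomial.natDegree_prod_le _ _) ?_)
    simp only [Polynomial.natDegree_X_sub_C, Finset.sum_const, smul_eq_mul, mul_one,
      Finset.card_erase_of_mem (Finset.mem_univ i), Finset.card_univ, Fintype.card_fin,
      Nat.add_sub_cancel, le_refl]
  set c : ℕ → D := fun k => ∑ i, β i * ((p i).coeff k : D) with hc
  have hcK : ∀ k, c k ∈ K := fun k =>
    Subring.sum_mem _ fun i _ => K.mul_mem (hβK i) (hFK (SetLike.coe_mem _))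
  have hswap : ∀ x : D, ∑ k ∈ Finset.range (m + 1), c k * x ^ k =
      ∑ i, β i * Polynomial.aeval x (p i) := by
    intro x
    have h1 : ∀ i, Polynomial.aeval x (p i) =
        ∑ k ∈ Finset.range (m + 1), ((p i).coeff k : D) * x ^ k := fun i => by
      rw [Polynomial.aeval_eq_sum_range' (hdeg i)]
      simp only [Algebra.smul_def, hCoe]
    calc ∑ k ∈ Finset.range (m + 1), c k * x ^ k
        = ∑ k ∈ Finset.range (m + 1), ∑ i, β i * (((p i).coeff k : D) * x ^ k) := by
          simp [hc, Finset.sum_mul, mul_assoc]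
      _ = ∑ i, ∑ k ∈ Finset.range (m + 1), β i * (((p i).coeff k : D) * x ^ k) :=
          Finset.sum_comm
      _ = ∑ i, β i * Polynomial.aeval x (p i) := by simp [h1, Finset.mul_sum]
  set P : F[X] := ∏ j, (X - C (α' j)) with hPdef
  have hrel2 : ∑ i, β i * Polynomial.aeval a (p i) = 0 := by
    have hP : ∀ i : Fin (m + 1), Polynomial.aeval a (p i) =
        (a - α i)⁻¹ * Polynomial.aeval a P := by
      intro i
      have h2 : P = (X - C (α' i)) * p i := by
        rw [hPdef, hp, ← Finset.mul_prod_erase Finset.univ _ (Finset.mem_univ i)]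
      rw [h2, map_mul, map_sub, Polynomial.aeval_X, Polynomial.aeval_C, hCoe,
        inv_mul_cancel_left₀ (ha i)]
    calc ∑ i, β i * Polynomial.aeval a (p i)
        = ∑ i, β i * ((a - α i)⁻¹ * Polynomial.aeval a P) := by
          refine Finset.sum_congr rfl fun i _ => by rw [hP]
      _ = (∑ i, β i * (a - α i)⁻¹) * Polynomial.aeval a P := by
          rw [Finset.sum_mul]; simp [mul_assoc]
      _ = 0 := by rw [hrel, zero_mul]
  refine ⟨m, c, hcK, ?_, by rw [hswap a, hrel2]⟩
  by_contra hcz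
  push_neg at hcz
  have hzero : ∑ k ∈ Finset.range (m + 1), c k * (α i0) ^ k = 0 := by
    refine Finset.sum_eq_zero fun k hk => ?_
    rw [hcz k (Nat.lt_succ_iff.mp (Finset.mem_range.mp hk)), zero_mul]
  rw [hswap (α i0)] at hzero
  have heval : ∀ i, Polynomial.aeval (α i0) (p i) = (((p i).eval (α' i0) : F) : D) := by
    intro i
    have hx : (α i0 : D) = algebraMap F D (α' i0) := rfl
    rw [Polynomial.aeval_def, hx, Polynomial.eval₂_at_apply, hCoe]
  have hevp : ∀ i, (p i).eval (α' i0) = ∏ j ∈ Finset.univ.erase i, (α' i0 - α' j) := by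
    intro i
    rw [hp]
    simp [Polynomial.eval_prod]
  have hzero2 : β i0 * (((p i0).eval (α' i0) : F) : D) = 0 := by
    rw [← hzero, Finset.sum_eq_single i0]
    · rw [heval]
    · intro i _ hii0
      have h0 : (∏ j ∈ Finset.univ.erase i, (α' i0 - α' j)) = 0 :=
        Finset.prod_eq_zero (Finset.mem_erase.mpr ⟨hii0.symm, Finset.mem_univ i0⟩)
          (sub_self _)
      rw [heval, hevp, h0]
      simp
    · simp
  have hne : ((p i0).eval (α' i0) : F) ≠ 0 := by
    rw [hevp, Finset.prod_ne_zero_iff]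
    intro j hj
    exact sub_ne_zero_of_ne fun e => (Finset.mem_erase.mp hj).1 (hα'inj e.symm)
  have hne' : (((p i0).eval (α' i0) : F) : D) ≠ 0 := by
    simpa using hne
  exact hβ0 ((mul_eq_zero.mp hzero2).resolve_right hne')
end

section
/- Let D be a division ring with center F, let K be a division subring of D containing F, and let a ∈ D. Suppose α_1, …, α_n are pairwise distinct elements of F such that a − α_i ≠ 0 for every i. Then either a is right algebraic over K, or the set {(a − α_1)^{-1}, …, (a − α_n)^{-1}} is right linearly independent over K (i.e., whenever β_1, …, β_n ∈ K satisfy (a − α_1)^{-1}β_1 + ⋯ + (a − α_n)^{-1}β_n = 0, all β_i = 0). -/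
/-!
If `∑ (a - α_i)⁻¹ β_i = 0` with some `β_{i₀} ≠ 0`, multiplying on the left by the central element
`∏_j (a - α_j)` clears the denominators: `∑ Q_i(a) β_i = 0` with `Q_i = ∏_{j ≠ i} (X - α_j)`.
Expanding the `Q_i` turns this into a right polynomial relation for `a` with coefficients in `K`.
The relation is nontrivial, because the same right polynomial evaluated at the central element
`α_{i₀}` is `Q_{i₀}(α_{i₀}) β_{i₀} ≠ 0`.
-/

/-- `a` is right algebraic over the division subring `K` of `D`:
there are coefficients `a_0, …, a_m ∈ K`, not all zero, with
`a_0 + a·a_1 + ⋯ + a^m·a_m = 0` (coefficients written on the right). -/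
def IsRightAlgebraicOver {D : Type*} [DivisionRing D] (K : Subring D) (a : D) : Prop :=
  ∃ (m : ℕ) (c : ℕ → D), (∀ i, c i ∈ K) ∧ (∃ i ≤ m, c i ≠ 0) ∧
    ∑ i ∈ Finset.range (m + 1), a ^ i * c i = 0

open Polynomial Finset Lagrange

theorem IsRightAlgebraicOver.of_sum_pow_mul {D : Type*} [DivisionRing D] {K : Subring D}
    {a x : D} {N : ℕ} {c : ℕ → D} (hc : ∀ k, c k ∈ K)
    (ha : ∑ k ∈ range (N + 1), a ^ k * c k = 0) (hx : ∑ k ∈ range (N + 1), x ^ k * c k ≠ 0) :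
    IsRightAlgebraicOver K a := by
  refine ⟨N, c, hc, ?_, ha⟩
  by_contra! h
  exact hx (sum_eq_zero fun k hk => by rw [h k (Nat.lt_succ_iff.mp (mem_range.mp hk)), mul_zero])

section

variable {F D : Type*} [Field F] [DivisionRing D] [Algebra F D]

theorem aeval_mul_eq_sum_pow_mul (x : D) {p : F[X]} {N : ℕ} (hp : p.natDegree ≤ N) (β : D) :
    aeval x p * β = ∑ k ∈ range (N + 1), x ^ k * (algebraMap F D (p.coeff k) * β) := by
  rw [aeval_eq_sum_range' (Nat.lt_succ_of_le hp), sum_mul]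
  refine sum_congr rfl fun k _ => ?_
  rw [Algebra.smul_def, Algebra.commutes, mul_assoc]

theorem isRightAlgebraicOver_of_sum_aeval_mul {K : Subring D} (hFK : ∀ r, algebraMap F D r ∈ K)
    {ι : Type*} [Fintype ι] (p : ι → F[X]) {β : ι → D} (hβ : ∀ i, β i ∈ K) {a x : D}
    (ha : ∑ i, aeval a (p i) * β i = 0) (hx : ∑ i, aeval x (p i) * β i ≠ 0) :
    IsRightAlgebraicOver K a := by
  obtain ⟨N, hN⟩ := Finite.exists_le fun i => (p i).natDegree
  have expand : ∀ y : D, ∑ i, aeval y (p i) * β i =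
      ∑ k ∈ range (N + 1), y ^ k * ∑ i, algebraMap F D ((p i).coeff k) * β i := fun y => by
    simp_rw [aeval_mul_eq_sum_pow_mul y (hN _), mul_sum]
    exact sum_comm
  rw [expand] at ha hx
  exact .of_sum_pow_mul (fun k => K.sum_mem fun i _ => K.mul_mem (hFK _) (hβ i)) ha hx

variable {ι : Type*} [Fintype ι] [DecidableEq ι] {v : ι → F} {β : ι → D}

theorem sum_aeval_nodal_erase_mul_eq_zero {a : D} (ha : ∀ i, a - algebraMap F D (v i) ≠ 0)
    (h : ∑ i, (a - algebraMap F D (v i))⁻¹ * β i = 0) :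
    ∑ i, aeval a (nodal (univ.erase i) v) * β i = 0 := by
  have hnodal : ∀ i, aeval a (nodal univ v) =
      aeval a (nodal (univ.erase i) v) * (a - algebraMap F D (v i)) := fun i => by
    rw [nodal_eq_mul_nodal_erase (mem_univ i), mul_comm, map_mul]
    simp
  calc ∑ i, aeval a (nodal (univ.erase i) v) * β i
      = aeval a (nodal univ v) * ∑ i, (a - algebraMap F D (v i))⁻¹ * β i := by
        rw [mul_sum]
        refine sum_congr rfl fun i _ => ?_
        rw [hnodal i, mul_assoc, mul_inv_cancel_left₀ (ha i)]
    _ = 0 := by rw [h, mul_zero]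

theorem sum_aeval_nodal_erase_mul_ne_zero (hv : Function.Injective v) {i₀ : ι} (hβ : β i₀ ≠ 0) :
    ∑ i, aeval (algebraMap F D (v i₀)) (nodal (univ.erase i) v) * β i ≠ 0 := by
  simp_rw [aeval_algebraMap_apply_eq_algebraMap_eval]
  rw [sum_eq_single_of_mem i₀ (mem_univ i₀) fun i _ hi => by
    rw [eval_nodal_at_node (mem_erase.mpr ⟨Ne.symm hi, mem_univ i₀⟩), map_zero, zero_mul]]
  refine mul_ne_zero ((_root_.map_ne_zero _).mpr ?_) hβ
  exact eval_nodal_not_at_node fun j hj => hv.ne (ne_of_mem_erase hj).symm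

end

theorem right_algebraic_or_inverses_right_linearIndependent_general
    {D : Type*} [DivisionRing D] (K : Subring D)
    (hFK : Subring.center D ≤ K)
    (a : D) (n : ℕ) (α : Fin n → D) (hαF : ∀ i, α i ∈ Subring.center D)
    (hα : Function.Injective α) (ha : ∀ i, a - α i ≠ 0) :
    IsRightAlgebraicOver K a ∨
      ∀ β : Fin n → D, (∀ i, β i ∈ K) →
        ∑ i, (a - α i)⁻¹ * β i = 0 → ∀ i, β i = 0 := by
  refine or_iff_not_imp_right.mpr fun hdep => ?_
  push Not at hdep
  obtain ⟨β, hβK, hsum, i₀, hβi₀⟩ := hdep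
  let v : Fin n → Subring.center D := fun i => ⟨α i, hαF i⟩
  have hv : Function.Injective v := fun i j h => hα (congrArg Subtype.val h)
  exact isRightAlgebraicOver_of_sum_aeval_mul (fun r => hFK r.2) _ hβK
    (sum_aeval_nodal_erase_mul_eq_zero (v := v) ha hsum) (sum_aeval_nodal_erase_mul_ne_zero hv hβi₀)

/-- Let `D` be a division ring with center `F`, `K` a division subring of `D` containing `F`,
and `a ∈ D`.  If `α_1, …, α_n` are pairwise distinct central elements with `a - α_i ≠ 0`
for all `i`, then either `a` is right algebraic over `K` or the family
`{(a - α_i)⁻¹}` is right linearly independent over `K`. -/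
theorem right_algebraic_or_inverses_right_linearIndependent
    {D : Type*} [DivisionRing D] (K : Subring D)
    (hKinv : ∀ x ∈ K, x⁻¹ ∈ K) (hFK : Subring.center D ≤ K)
    (a : D) (n : ℕ) (α : Fin n → D) (hαF : ∀ i, α i ∈ Subring.center D)
    (hα : Function.Injective α) (ha : ∀ i, a - α i ≠ 0) :
    IsRightAlgebraicOver K a ∨
      ∀ β : Fin n → D, (∀ i, β i ∈ K) →
        ∑ i, (a - α i)⁻¹ * β i = 0 → ∀ i, β i = 0 :=
  right_algebraic_or_inverses_right_linearIndependent_general K hFK a n α hαF hα ha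
end

section
/- Let D be a division ring whose center F is uncountable, let K be a division subring of D containing F, and let N be a normal subgroup of the multiplicative group D*. If N is non-central, then every element of N is right algebraic over K if and only if every element of D is right algebraic over K. -/
/-!
Suppose `a` is not right algebraic over `K`. A Cartan–Brauer–Hua argument gives `w ∈ N` not
commuting with `a`; let `δ = w⁻¹ a w - a ≠ 0`. For central `ν` the commutator
`w⁻¹ (a + ν) w (a + ν)⁻¹ = δ (a + ν)⁻¹ + 1` lies in `N`, so is right algebraic. Shifting and
reversing its relation puts `δ (a + ν)⁻¹` in the right `K`-span of the powers of
`(a + ν) δ⁻¹ = a δ⁻¹ + ν δ⁻¹` below its degree `m`, hence in the span of the finitely many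
products of `m` factors from `{1, a δ⁻¹, δ⁻¹}`, which does not depend on `ν`. The center being
uncountable, one `m` serves infinitely many `ν`. But the `(a + ν)⁻¹` are right `K`-linearly
independent: multiplying a relation by `a + μ` removes the `μ`-term and leaves a shorter relation
plus a right polynomial in `a`, and that polynomial must vanish.
-/

open Pointwise

section RightAlgebraic

variable {D : Type*} [DivisionRing D] {K : Subring D}

def IsRightAlgebraicOfDegreeLE (K : Subring D) (m : ℕ) (a : D) : Prop :=
  ∃ c : ℕ → D, (∀ i, c i ∈ K) ∧ (∃ i ≤ m, c i ≠ 0) ∧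
    ∑ i ∈ Finset.range (m + 1), a ^ i * c i = 0

theorem isRightAlgebraicOver_of_mem {x : D} (hx : x ∈ K) : IsRightAlgebraicOver K x :=
  ⟨1, fun i => if i = 0 then -x else 1, fun i => by
    by_cases i = 0 <;> simp [*, K.neg_mem hx, K.one_mem],
    ⟨1, le_rfl, by simp⟩, by simp [Finset.sum_range_succ]⟩

theorem add_ne_zero_of_not_isRightAlgebraicOver {a μ : D} (ha : ¬ IsRightAlgebraicOver K a)
    (hμ : μ ∈ K) : a + μ ≠ 0 := fun h =>
  ha (isRightAlgebraicOver_of_mem (by rw [eq_neg_of_add_eq_zero_left h]; exact K.neg_mem hμ))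

-- Right `K`-linear combinations are spans for the action `k • v = v * k` of `K.op` on `D`.
theorem mul_mem_span_op {S : Set D} {v k : D} (hv : v ∈ Submodule.span K.op S) (hk : k ∈ K) :
    v * k ∈ Submodule.span K.op S :=
  Submodule.smul_mem _ ⟨MulOpposite.op k, hk⟩ hv

theorem mul_left_mem_span_op (d : D) {S : Set D} {v : D} (hv : v ∈ Submodule.span K.op S) :
    d * v ∈ Submodule.span K.op ((d * ·) '' S) :=
  Submodule.apply_mem_span_image_of_mem_span (LinearMap.mulLeft K.op d) hv

theorem mul_left_mem_span_op_of_forall {d v : D} {S : Set D}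
    (hS : ∀ s ∈ S, d * s ∈ Submodule.span K.op S) (hv : v ∈ Submodule.span K.op S) :
    d * v ∈ Submodule.span K.op S :=
  Submodule.span_le.2 (Set.image_subset_iff.2 hS) (mul_left_mem_span_op d hv)

theorem isRightAlgebraicOver_of_not_linearIndependent {a : D}
    (h : ¬ LinearIndependent K.op (a ^ ·)) : IsRightAlgebraicOver K a := by
  classical
  obtain ⟨s, g, hsum, i, his, hgi⟩ : ∃ (s : Finset ℕ) (g : ℕ → K.op),
      ∑ i ∈ s, g i • a ^ i = 0 ∧ ∃ i ∈ s, g i ≠ 0 := by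
    simpa [linearIndependent_iff'] using h
  have hs : s ⊆ Finset.range (s.sup id + 1) := fun j hj =>
    Finset.mem_range_succ_iff.2 (Finset.le_sup (f := id) hj)
  refine ⟨s.sup id, fun j => if j ∈ s then (g j : Dᵐᵒᵖ).unop else 0, fun j => ?_,
    ⟨i, Finset.le_sup (f := id) his, by simpa [his] using hgi⟩, ?_⟩
  · dsimp only
    split_ifs
    exacts [Subring.mem_op.1 (g j).2, K.zero_mem]
  · rw [← Finset.sum_subset hs fun j _ hj => by simp [hj], ← hsum]
    exact Finset.sum_congr rfl fun j hj => by
      simp [hj, Subring.smul_def, MulOpposite.smul_eq_mul_unop]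

theorem Commute.add_pow_eq_sum_range {b μ : D} (h : Commute b μ) {i m : ℕ} (him : i ≤ m) :
    (b + μ) ^ i = ∑ t ∈ Finset.range (m + 1), b ^ t * (μ ^ (i - t) * i.choose t) := by
  rw [h.add_pow, ← Finset.sum_subset (Finset.range_subset_range.2 (by omega : i + 1 ≤ m + 1))]
  · exact Finset.sum_congr rfl fun t _ => mul_assoc _ _ _
  · intro t _ ht
    rw [Finset.mem_range, not_lt] at ht
    simp [Nat.choose_eq_zero_of_lt (by omega : i < t)]

theorem IsRightAlgebraicOfDegreeLE.of_add {m : ℕ} {b μ : D} (hμ : μ ∈ K) (hbμ : Commute b μ)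
    (h : IsRightAlgebraicOfDegreeLE K m (b + μ)) : IsRightAlgebraicOfDegreeLE K m b := by
  classical
  obtain ⟨c, hcK, ⟨i, him, hci⟩, hsum⟩ := h
  set d : ℕ → D := fun t => ∑ i ∈ Finset.range (m + 1), μ ^ (i - t) * i.choose t * c i
  -- the binomial transform is unitriangular, so the top nonzero coefficient survives
  set top := Nat.findGreatest (fun i => c i ≠ 0) m
  have htop : c top ≠ 0 := Nat.findGreatest_spec (P := fun i => c i ≠ 0) him hci
  have hd : d top = c top := by
    simp only [d]
    rw [Finset.sum_eq_single top]
    · simp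
    · intro j hj hjt
      rcases lt_or_gt_of_ne hjt with hlt | hgt
      · simp [Nat.choose_eq_zero_of_lt hlt]
      · rw [not_ne_iff.1 (Nat.findGreatest_is_greatest (P := fun i => c i ≠ 0) hgt
          (Finset.mem_range_succ_iff.1 hj)), mul_zero]
    · exact fun h => absurd (Finset.mem_range_succ_iff.2 (Nat.findGreatest_le m)) h
  refine ⟨d, fun t => sum_mem fun i _ =>
      K.mul_mem (K.mul_mem (K.pow_mem hμ _) (natCast_mem K _)) (hcK i),
    ⟨top, Nat.findGreatest_le m, hd ▸ htop⟩, ?_⟩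
  calc ∑ t ∈ Finset.range (m + 1), b ^ t * d t
      = ∑ i ∈ Finset.range (m + 1), ∑ t ∈ Finset.range (m + 1),
          b ^ t * (μ ^ (i - t) * i.choose t) * c i := by
        simp only [d, Finset.mul_sum, mul_assoc]
        exact Finset.sum_comm
    _ = ∑ i ∈ Finset.range (m + 1), (b + μ) ^ i * c i :=
        Finset.sum_congr rfl fun i hi => by
          rw [hbμ.add_pow_eq_sum_range (Finset.mem_range_succ_iff.1 hi), Finset.sum_mul]
    _ = 0 := hsum

theorem IsRightAlgebraicOfDegreeLE.mem_span_inv_pow (hK : ∀ x ∈ K, x⁻¹ ∈ K) {z : D}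
    (hz : z ≠ 0) : ∀ {m : ℕ}, IsRightAlgebraicOfDegreeLE K m z →
      z ∈ Submodule.span K.op ((z⁻¹ ^ ·) '' Set.Iio m)
  | 0, ⟨d, _, ⟨i, hi, hdi⟩, hsum⟩ => by
    obtain rfl : i = 0 := by omega
    simp only [zero_add, Finset.sum_range_one, pow_zero, one_mul] at hsum
    exact absurd hsum hdi
  | m + 1, ⟨d, hdK, ⟨i, hi, hdi⟩, hsum⟩ => by
    rw [Finset.sum_range_succ] at hsum
    by_cases htop : d (m + 1) = 0
    · have hi' : i ≤ m := by
        rcases Nat.lt_or_eq_of_le hi with h | rfl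
        exacts [Nat.lt_succ_iff.1 h, absurd htop hdi]
      have hlow : IsRightAlgebraicOfDegreeLE K m z :=
        ⟨d, hdK, ⟨i, hi', hdi⟩, by simpa [htop] using hsum⟩
      exact Submodule.span_mono (Set.image_mono (Set.Iio_subset_Iio (by omega)))
        (mem_span_inv_pow hK hz hlow)
    · -- multiplying the relation by `z⁻¹ ^ m` isolates `z` in the top term
      have h : ∑ t ∈ Finset.range (m + 1), z⁻¹ ^ (m - t) * d t + z * d (m + 1) = 0 := by
        rw [← mul_zero (z⁻¹ ^ m), ← hsum, mul_add, Finset.mul_sum, ← mul_assoc, pow_succ,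
          ← mul_assoc, inv_pow, inv_mul_cancel₀ (pow_ne_zero m hz), one_mul]
        exact congrArg (· + _) (Finset.sum_congr rfl fun t ht => by
          rw [← mul_assoc, inv_pow_sub₀ hz (Finset.mem_range_succ_iff.1 ht)])
      have hz_eq : z = -∑ t ∈ Finset.range (m + 1), z⁻¹ ^ (m - t) * (d t * (d (m + 1))⁻¹) :=
        calc z = z * d (m + 1) * (d (m + 1))⁻¹ := (mul_inv_cancel_right₀ htop z).symm
          _ = _ := by
            rw [eq_neg_of_add_eq_zero_right h, neg_mul, Finset.sum_mul]
            simp only [mul_assoc]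
      have hmem := Submodule.neg_mem _ (Submodule.sum_mem (Submodule.span K.op
        ((z⁻¹ ^ ·) '' Set.Iio (m + 1))) fun t (ht : t ∈ Finset.range (m + 1)) =>
          mul_mem_span_op (Submodule.subset_span ⟨m - t, by simp, rfl⟩)
            (K.mul_mem (hdK t) (hK _ (hdK (m + 1)))))
      rwa [← hz_eq] at hmem

theorem mul_mem_span_range_pow {a v : D} (hv : v ∈ Submodule.span K.op (Set.range (a ^ ·))) :
    a * v ∈ Submodule.span K.op (Set.range (a ^ ·)) :=
  mul_left_mem_span_op_of_forall
    (by rintro _ ⟨i, rfl⟩; exact Submodule.subset_span ⟨i + 1, pow_succ' a i⟩) hv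

theorem mem_span_range_pow_of_mem (a : D) {k : D} (hk : k ∈ K) :
    k ∈ Submodule.span K.op (Set.range (a ^ ·)) := by
  have h1 : a ^ 0 ∈ Submodule.span K.op (Set.range (a ^ ·)) :=
    Submodule.subset_span (Set.mem_range_self 0)
  simpa using mul_mem_span_op h1 hk

theorem mul_mem_span_range_pow_of_commute {a μ v : D} (hμ : μ ∈ K) (haμ : Commute a μ)
    (hv : v ∈ Submodule.span K.op (Set.range (a ^ ·))) :
    μ * v ∈ Submodule.span K.op (Set.range (a ^ ·)) := by
  refine mul_left_mem_span_op_of_forall ?_ hv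
  rintro _ ⟨i, rfl⟩
  rw [← (haμ.pow_left i).eq]
  exact mul_mem_span_op (Submodule.subset_span ⟨i, rfl⟩) hμ

theorem span_range_pow_le_span_range_pow_add {a μ : D} (hμ : μ ∈ K) (haμ : Commute a μ) :
    Submodule.span K.op (Set.range (a ^ ·)) ≤ Submodule.span K.op (Set.range ((a + μ) ^ ·)) := by
  refine Submodule.span_le.2 ?_
  rintro _ ⟨i, rfl⟩
  induction i with
  | zero => exact Submodule.subset_span ⟨0, by simp⟩
  | succ i ih =>
    dsimp only at ih ⊢
    rw [pow_succ', ← add_sub_cancel_right (a * a ^ i) (μ * a ^ i), ← add_mul]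
    exact Submodule.sub_mem _ (mul_mem_span_range_pow ih)
      (mul_mem_span_range_pow_of_commute hμ (haμ.add_left (Commute.refl μ)) ih)

theorem eq_zero_of_inv_add_mul_mem_span_range_pow (hK : ∀ x ∈ K, x⁻¹ ∈ K) {a μ k : D}
    (ha : ¬ IsRightAlgebraicOver K a) (hμ : μ ∈ K) (haμ : Commute a μ) (hk : k ∈ K)
    (hmem : (a + μ)⁻¹ * k ∈ Submodule.span K.op (Set.range (a ^ ·))) : k = 0 := by
  by_contra hk0
  set t := a + μ
  have ht : t ≠ 0 := add_ne_zero_of_not_isRightAlgebraicOver ha hμ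
  have hinv : t⁻¹ ∈ Submodule.span K.op (Set.range (t ^ ·)) :=
    span_range_pow_le_span_range_pow_add hμ haμ
      (by simpa [mul_inv_cancel_right₀ hk0] using mul_mem_span_op hmem (hK k hk))
  -- `1 = t * t⁻¹` is a right combination of positive powers of `t`
  have hone : t ^ 0 ∈ Submodule.span K.op ((t ^ ·) '' Set.Ioi 0) := by
    have h := mul_left_mem_span_op t hinv
    rw [mul_inv_cancel₀ ht] at h
    rw [pow_zero]
    refine Submodule.span_mono ?_ h
    rintro _ ⟨_, ⟨i, rfl⟩, rfl⟩
    exact ⟨i + 1, i.succ_pos, pow_succ' t i⟩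
  obtain ⟨m, hm⟩ := isRightAlgebraicOver_of_not_linearIndependent
    fun hli => hli.notMem_span_image (lt_irrefl 0) hone
  exact ha ⟨m, IsRightAlgebraicOfDegreeLE.of_add hμ haμ hm⟩

theorem add_mul_inv_add_eq {a μ ν : D} (h : a + ν ≠ 0) (hc : Commute (a + ν) (μ - ν)) :
    (a + μ) * (a + ν)⁻¹ = 1 + (a + ν)⁻¹ * (μ - ν) := by
  rw [show a + μ = (a + ν) + (μ - ν) by abel, add_mul, mul_inv_cancel₀ h, hc.inv_left₀.eq]

theorem eq_zero_of_sum_inv_add_mul_mem_span_range_pow (hK : ∀ x ∈ K, x⁻¹ ∈ K)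
    (hFK : Subring.center D ≤ K) {a : D} (ha : ¬ IsRightAlgebraicOver K a)
    (s : Finset (Subring.center D)) {k : Subring.center D → D} (hk : ∀ ν, k ν ∈ K)
    (hmem : ∑ ν ∈ s, (a + ν)⁻¹ * k ν ∈ Submodule.span K.op (Set.range (a ^ ·))) :
    ∀ ν ∈ s, k ν = 0 := by
  classical
  set P := Submodule.span K.op (Set.range (a ^ ·))
  have hcomm (x : D) (ν : Subring.center D) : Commute x ν := Subring.mem_center_iff.1 ν.2 x
  have hne (ν : Subring.center D) : a + ν ≠ 0 :=
    add_ne_zero_of_not_isRightAlgebraicOver ha (hFK ν.2)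
  induction s using Finset.induction_on generalizing k with
  | empty => simp
  | insert μ s hμs ih =>
    rw [Finset.sum_insert hμs] at hmem
    have hP : ∀ v ∈ P, (a + μ) * v ∈ P := fun v hv => by
      rw [add_mul]
      exact add_mem (mul_mem_span_range_pow hv)
        (mul_mem_span_range_pow_of_commute (hFK μ.2) (hcomm a μ) hv)
    -- multiplying by `a + μ` removes the `μ`-term and keeps the shape of the others
    have hexpand : (a + μ) * ((a + μ)⁻¹ * k μ + ∑ ν ∈ s, (a + ν)⁻¹ * k ν) =
        (k μ + ∑ ν ∈ s, k ν) + ∑ ν ∈ s, (a + ν)⁻¹ * ((μ - ν) * k ν) := by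
      rw [mul_add, ← mul_assoc, mul_inv_cancel₀ (hne μ), one_mul, Finset.mul_sum, add_assoc,
        ← Finset.sum_add_distrib]
      refine congrArg (k μ + ·) (Finset.sum_congr rfl fun ν _ => ?_)
      have hc : Commute (a + ν) (μ - ν) := hcomm _ ⟨_, Subring.sub_mem _ μ.2 ν.2⟩
      rw [← mul_assoc, add_mul_inv_add_eq (hne ν) hc, add_mul, one_mul, mul_assoc]
    have hrest : ∑ ν ∈ s, (a + ν)⁻¹ * ((μ - ν) * k ν) ∈ P := by
      have := P.sub_mem (hP _ hmem)
        (mem_span_range_pow_of_mem a (K.add_mem (hk μ) (sum_mem (t := s) fun ν _ => hk ν)))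
      rwa [hexpand, add_sub_cancel_left] at this
    have hs : ∀ ν ∈ s, k ν = 0 := fun ν hν =>
      have hk' := ih (fun ν => K.mul_mem (K.sub_mem (hFK μ.2) (hFK ν.2)) (hk ν)) hrest ν hν
      (mul_eq_zero.1 hk').resolve_left (sub_ne_zero.2 fun h => hμs (Subtype.ext h ▸ hν))
    have hsum : ∑ ν ∈ s, (a + ν)⁻¹ * k ν = 0 :=
      Finset.sum_eq_zero fun ν hν => by rw [hs ν hν, mul_zero]
    rw [hsum, add_zero] at hmem
    have hμ : k μ = 0 :=
      eq_zero_of_inv_add_mul_mem_span_range_pow hK ha (hFK μ.2) (hcomm a μ) (hk μ) hmem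
    intro ν hν
    rcases Finset.mem_insert.1 hν with rfl | hν
    exacts [hμ, hs ν hν]

theorem linearIndependent_inv_add_center (hK : ∀ x ∈ K, x⁻¹ ∈ K) (hFK : Subring.center D ≤ K)
    {a : D} (ha : ¬ IsRightAlgebraicOver K a) :
    LinearIndependent K.op fun ν : Subring.center D => (a + ν)⁻¹ := by
  refine linearIndependent_iff'.2 fun s g hg ν hν => Subtype.ext (MulOpposite.unop_injective ?_)
  refine eq_zero_of_sum_inv_add_mul_mem_span_range_pow hK hFK ha s
    (k := fun ν => (g ν : Dᵐᵒᵖ).unop) (fun ν => Subring.mem_op.1 (g ν).2) ?_ ν hν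
  rw [show ∑ ν ∈ s, (a + ν)⁻¹ * (g ν : Dᵐᵒᵖ).unop = 0 from hg]
  exact zero_mem _

theorem add_mul_pow_mem_span_pow [DecidableEq D] {A B ν : D} (hν : ν ∈ Subring.center D)
    (hνK : ν ∈ K) (n : ℕ) :
    (A + ν * B) ^ n ∈ Submodule.span K.op (↑(({1, A, B} : Finset D) ^ n) : Set D) := by
  set X : Finset D := {1, A, B}
  induction n with
  | zero => exact Submodule.subset_span (by simp)
  | succ n ih =>
    have hstep : ∀ x ∈ X, x * (A + ν * B) ^ n ∈ Submodule.span K.op (↑(X ^ (n + 1)) : Set D) :=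
      fun x hx => Submodule.span_mono (by
        rintro _ ⟨w, hw, rfl⟩
        rw [pow_succ']
        exact Finset.mul_mem_mul hx hw) (mul_left_mem_span_op x ih)
    rw [pow_succ' (A + ν * B), add_mul, mul_assoc,
      ← Subring.mem_center_iff.1 hν (B * (A + ν * B) ^ n)]
    exact add_mem (hstep A (by simp [X])) (mul_mem_span_op (hstep B (by simp [X])) hνK)

noncomputable abbrev Subring.toDivisionRing (S : Subring D) (h : ∀ x ∈ S, x⁻¹ ∈ S) :
    DivisionRing S :=
  DivisionRing.ofIsUnitOrEqZero fun x => or_iff_not_imp_right.2 fun hx =>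
    have hx : (x : D) ≠ 0 := fun h0 => hx (Subtype.ext h0)
    isUnit_iff_exists.2
      ⟨⟨_, h x x.2⟩, Subtype.ext (mul_inv_cancel₀ hx), Subtype.ext (inv_mul_cancel₀ hx)⟩

theorem finite_setOf_mul_inv_add_mem_span (hK : ∀ x ∈ K, x⁻¹ ∈ K) (hFK : Subring.center D ≤ K)
    {a δ : D} (ha : ¬ IsRightAlgebraicOver K a) (hδ : δ ≠ 0) (W : Set D) [Finite W] :
    {ν : Subring.center D | δ * (a + ν)⁻¹ ∈ Submodule.span K.op W}.Finite := by
  let _ : DivisionRing K.op := K.op.toDivisionRing fun x hx => by simpa using hK _ hx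
  have hli : LinearIndependent K.op
      fun ν : {ν : Subring.center D | δ * (a + ν)⁻¹ ∈ Submodule.span K.op W} => δ * (a + ν)⁻¹ :=
    ((linearIndependent_inv_add_center hK hFK ha).map' (LinearMap.mulLeft K.op δ)
      (LinearMap.ker_eq_bot.2 (mul_right_injective₀ hδ))).comp _ Subtype.val_injective
  exact Set.finite_coe_iff.1
    (hli.finite_of_le_span_finite _ W (by rintro _ ⟨ν, rfl⟩; exact ν.2))

theorem exists_not_isRightAlgebraicOver_mul_inv_add_one [Uncountable (Subring.center D)]
    (hK : ∀ x ∈ K, x⁻¹ ∈ K) (hFK : Subring.center D ≤ K) {a δ : D}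
    (ha : ¬ IsRightAlgebraicOver K a) (hδ : δ ≠ 0) :
    ∃ ν ∈ Subring.center D, ¬ IsRightAlgebraicOver K (δ * (a + ν)⁻¹ + 1) := by
  classical
  by_contra! h
  set X : Finset D := {1, a * δ⁻¹, δ⁻¹}
  have hdeg (ν : Subring.center D) :
      ∃ m, δ * (a + ν)⁻¹ ∈ Submodule.span K.op (↑(X ^ m) : Set D) := by
    obtain ⟨m, hm⟩ : ∃ m, IsRightAlgebraicOfDegreeLE K m (δ * (a + ν)⁻¹ + 1) := h ν ν.2
    have hz : δ * (a + ν)⁻¹ ≠ 0 :=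
      mul_ne_zero hδ (inv_ne_zero (add_ne_zero_of_not_isRightAlgebraicOver ha (hFK ν.2)))
    refine ⟨m, Submodule.span_le.2 ?_
      ((hm.of_add K.one_mem (Commute.one_right _)).mem_span_inv_pow hK hz)⟩
    rintro _ ⟨s, hs, rfl⟩
    rw [mul_inv_rev, inv_inv, add_mul]
    exact Submodule.span_mono
      (Finset.coe_subset.2 (Finset.pow_subset_pow_right (by simp [X]) (le_of_lt hs)))
      (add_mul_pow_mem_span_pow ν.2 (hFK ν.2) s)
  have hcover : (Set.univ : Set (Subring.center D)) ⊆
      ⋃ m, {ν | δ * (a + ν)⁻¹ ∈ Submodule.span K.op (↑(X ^ m) : Set D)} :=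
    fun ν _ => Set.mem_iUnion.2 (hdeg ν)
  exact not_countable (Set.countable_univ_iff.1 ((Set.countable_iUnion fun m =>
    (finite_setOf_mul_inv_add_mem_span hK hFK ha hδ _).countable).mono hcover))

end RightAlgebraic

section Conjugation

variable {D : Type*} [DivisionRing D]

theorem commute_of_forall_conj_commute {a u x : D}
    (h : ∀ y : D, y ≠ 0 → Commute (y * u * y⁻¹) a) (hx : ¬ Commute x a) : Commute u x := by
  have hx0 : x ≠ 0 := by rintro rfl; exact hx (Commute.zero_left a)
  have hx1 : 1 + x ≠ 0 := fun h1 => hx <| by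
    rw [eq_neg_of_add_eq_zero_right h1]; exact (Commute.one_left a).neg_left
  have hua : Commute u a := by simpa using h 1 one_ne_zero
  set c₁ := x * u * x⁻¹
  set c₂ := (1 + x) * u * (1 + x)⁻¹
  have e₁ : c₁ * x = x * u := by simp [c₁, mul_assoc, inv_mul_cancel₀ hx0]
  have e₂ : c₂ * (1 + x) = (1 + x) * u := by simp [c₂, mul_assoc, inv_mul_cancel₀ hx1]
  have hkey : (c₁ - c₂) * x = c₂ - u := by linear_combination (norm := noncomm_ring) e₁ - e₂
  by_cases hc : c₁ = c₂
  · rw [hc, sub_self, zero_mul, eq_comm, sub_eq_zero] at hkey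
    rw [hkey] at e₂
    show u * x = x * u
    linear_combination (norm := noncomm_ring) e₂
  · -- otherwise `x = (c₁ - c₂)⁻¹ (c₂ - u)` would commute with `a`
    refine absurd ?_ hx
    rw [← inv_mul_cancel_left₀ (sub_ne_zero.2 hc) x, hkey]
    exact ((h x hx0).sub_left (h _ hx1)).inv_left₀.mul_left ((h _ hx1).sub_left hua)

theorem mem_center_of_forall_conj_commute {a u : D} (ha : a ∉ Subring.center D)
    (h : ∀ y : D, y ≠ 0 → Commute (y * u * y⁻¹) a) : u ∈ Subring.center D := by
  obtain ⟨x, hx⟩ : ∃ x : D, ¬ Commute x a := by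
    by_contra! hall
    exact ha (Subring.mem_center_iff.2 hall)
  refine Subring.mem_center_iff.2 fun g => Commute.symm ?_
  by_cases hg : Commute g a
  · have hgx : ¬ Commute (g + x) a := fun h' => hx (by simpa using h'.sub_left hg)
    simpa using (commute_of_forall_conj_commute h hgx).sub_right
      (commute_of_forall_conj_commute h hx)
  · exact commute_of_forall_conj_commute h hg

theorem Subgroup.Normal.exists_mem_not_commute {N : Subgroup Dˣ} (hN : N.Normal)
    (hNc : ∃ u ∈ N, (u : D) ∉ Subring.center D) {a : D} (ha : a ∉ Subring.center D) :
    ∃ w ∈ N, ¬ Commute (w : D) a := by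
  obtain ⟨u, huN, hu⟩ := hNc
  by_contra! h
  refine hu (mem_center_of_forall_conj_commute ha fun y hy => ?_)
  simpa using h _ (hN.conj_mem u huN (Units.mk0 y hy))

theorem Units.val_inv_mul_conj_mk0_add {w : Dˣ} {a ν : D} (hν : ν ∈ Subring.center D)
    (h : a + ν ≠ 0) :
    ((w⁻¹ * (Units.mk0 (a + ν) h * w * (Units.mk0 (a + ν) h)⁻¹) : Dˣ) : D) =
      ((w : D)⁻¹ * a * w - a) * (a + ν)⁻¹ + 1 := by
  have hw : (w : D)⁻¹ * ν * w = ν := by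
    rw [mul_assoc, ← Subring.mem_center_iff.1 hν, ← mul_assoc, inv_mul_cancel₀ w.ne_zero,
      one_mul]
  calc ((w⁻¹ * (Units.mk0 (a + ν) h * w * (Units.mk0 (a + ν) h)⁻¹) : Dˣ) : D)
      = ((w : D)⁻¹ * (a + ν) * w) * (a + ν)⁻¹ := by simp [mul_assoc]
    _ = (((w : D)⁻¹ * a * w - a) + (a + ν)) * (a + ν)⁻¹ := by
      rw [mul_add, add_mul, hw]
      congr 1
      abel
    _ = _ := by rw [add_mul, mul_inv_cancel₀ h]

end Conjugation

/-- Let `D` be a division ring whose center is uncountable, `K` a division subring of `D`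
containing the center, and `N` a non-central normal subgroup of `Dˣ`.  Then every element
of `N` is right algebraic over `K` iff every element of `D` is right algebraic over `K`. -/
theorem normalSubgroup_rightAlgebraic_iff_rightAlgebraic
    {D : Type*} [DivisionRing D] [Uncountable (Subring.center D)]
    (K : Subring D) (hKinv : ∀ x ∈ K, x⁻¹ ∈ K) (hFK : Subring.center D ≤ K)
    (N : Subgroup Dˣ) (hNnorm : N.Normal)
    (hN : ∃ u ∈ N, (u : D) ∉ Subring.center D) :
    (∀ u ∈ N, IsRightAlgebraicOver K (u : D)) ↔ ∀ a : D, IsRightAlgebraicOver K a := by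
  refine ⟨fun hNalg => ?_, fun h u _ => h u⟩
  by_contra! ⟨a, ha⟩
  obtain ⟨w, hwN, hwa⟩ := hNnorm.exists_mem_not_commute hN
    fun h => ha (isRightAlgebraicOver_of_mem (hFK h))
  have hδ : (w : D)⁻¹ * a * w - a ≠ 0 := sub_ne_zero.2 fun h =>
    hwa <| show (w : D) * a = a * w by simpa [mul_assoc] using (congrArg ((w : D) * ·) h).symm
  obtain ⟨ν, hν, hν_alg⟩ := exists_not_isRightAlgebraicOver_mul_inv_add_one hKinv hFK ha hδ
  have hne := add_ne_zero_of_not_isRightAlgebraicOver ha (hFK hν)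
  have hmem :=
    hNalg _ (N.mul_mem (N.inv_mem hwN) (hNnorm.conj_mem w hwN (Units.mk0 (a + ν) hne)))
  rw [Units.val_inv_mul_conj_mk0_add hν hne] at hmem
  exact hν_alg hmem
end

section
/- Let D be a division ring whose center F is uncountable, and let N be a non-central normal subgroup of the multiplicative group D*. If every element of N is algebraic over F, then every element of D is algebraic over F. -/
open Polynomial

section Aux

variable {D : Type*} [DivisionRing D]

/-- Conjugation by a unit as an algebra homomorphism over the center. -/
private def conjAlgHom (u : Dˣ) : D →ₐ[Subring.center D] D where
  toFun x := (u : D) * x * (↑u⁻¹ : D)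
  map_one' := by simp
  map_mul' x y := by simp only [mul_assoc, Units.inv_mul_cancel_left]
  map_zero' := by simp
  map_add' x y := by simp [mul_add, add_mul]
  commutes' r := by
    have hr : (u : D) * (r : D) = (r : D) * (u : D) :=
      (Subring.mem_center_iff.1 r.2 (u : D))
    show (u : D) * (r : D) * (↑u⁻¹ : D) = _
    rw [hr, mul_assoc, Units.mul_inv, mul_one]
    rfl

private lemma conjAlgHom_apply (u : Dˣ) (x : D) :
    conjAlgHom u x = (u : D) * x * (↑u⁻¹ : D) := rfl

/-- If a conjugate of `x` is algebraic over the center, so is `x`. -/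
private lemma isAlgebraic_of_conj (u : Dˣ) {x : D}
    (h : IsAlgebraic (Subring.center D) ((u : D) * x * (↑u⁻¹ : D))) :
    IsAlgebraic (Subring.center D) x := by
  obtain ⟨p, hp0, hpe⟩ := h
  refine ⟨p, hp0, ?_⟩
  have hx : (conjAlgHom u⁻¹) ((u : D) * x * (↑u⁻¹ : D)) = x := by
    rw [conjAlgHom_apply]
    simp [mul_assoc, Units.inv_mul_cancel_left, Units.inv_mul]
  have h2 := Polynomial.aeval_algHom_apply (conjAlgHom u⁻¹) ((u : D) * x * (↑u⁻¹ : D)) p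
  rw [hx, hpe, map_zero] at h2
  exact h2

end Aux

section Aux2

variable {D : Type*} [DivisionRing D]

/-- Translation by a central element preserves algebraicity. -/
private lemma isAlgebraic_add_central {x : D} (r : Subring.center D)
    (h : IsAlgebraic (Subring.center D) x) :
    IsAlgebraic (Subring.center D) (x + algebraMap (Subring.center D) D r) := by
  obtain ⟨p, hp0, hpe⟩ := h
  refine ⟨p.comp (X - C r), ?_, ?_⟩
  · intro hq
    apply hp0
    have : (p.comp (X - C r)).comp (X + C r) = p := by
      rw [comp_assoc, sub_comp, X_comp, C_comp, add_sub_cancel_right, comp_X]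
    rw [← this, hq, zero_comp]
  · rw [aeval_comp]
    have : (aeval (x + algebraMap (Subring.center D) D r)) (X - C r) = x := by
      simp
    rw [this, hpe]

/-- From a nonzero annihilating polynomial and `x ≠ 0`, get one with nonzero constant
coefficient. -/
private lemma exists_coeff_zero_ne_zero {x : D} (hx : x ≠ 0) :
    ∀ n (p : (Subring.center D)[X]), p.natDegree ≤ n → p ≠ 0 → aeval x p = 0 →
      ∃ q : (Subring.center D)[X], q.coeff 0 ≠ 0 ∧ aeval x q = 0 := by
  intro n
  induction n with
  | zero =>
    intro p hdeg hp0 hpe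
    exfalso
    have hc : p = C (p.coeff 0) := eq_C_of_natDegree_le_zero hdeg
    have : p.coeff 0 ≠ 0 := fun h => hp0 (by rw [hc, h, map_zero])
    apply this
    have : algebraMap (Subring.center D) D (p.coeff 0) = 0 := by
      rw [hc] at hpe; simpa using hpe
    exact (map_eq_zero_iff _ (RingHom.injective _)).1 this
  | succ n ih =>
    intro p hdeg hp0 hpe
    by_cases h0 : p.coeff 0 ≠ 0
    · exact ⟨p, h0, hpe⟩
    · push_neg at h0
      have hXd : X * p.divX = p := by
        have := X_mul_divX_add p
        rwa [h0, map_zero, add_zero] at this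
      have hdvx0 : p.divX ≠ 0 := by
        intro h
        rw [h, mul_zero] at hXd
        exact hp0 hXd.symm
      have hdeg' : p.divX.natDegree ≤ n := by
        have h1 : p.divX.natDegree = p.natDegree - 1 := natDegree_divX_eq_natDegree_tsub_one
        omega
      have hpe' : aeval x p.divX = 0 := by
        have : aeval x (X * p.divX) = 0 := by rw [hXd]; exact hpe
        rw [map_mul, aeval_X] at this
        exact (mul_eq_zero.1 this).resolve_left hx
      exact ih p.divX hdeg' hdvx0 hpe'

/-- The inverse of a nonzero algebraic element is algebraic. -/
private lemma isAlgebraic_inv {x : D} (hx : x ≠ 0)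
    (h : IsAlgebraic (Subring.center D) x) :
    IsAlgebraic (Subring.center D) x⁻¹ := by
  obtain ⟨p, hp0, hpe⟩ := h
  obtain ⟨q, hq0, hqe⟩ := exists_coeff_zero_ne_zero hx p.natDegree p le_rfl hp0 hpe
  set n := q.natDegree with hn
  refine ⟨∑ i ∈ Finset.range (n + 1), C (q.coeff i) * X ^ (n - i), ?_, ?_⟩
  · intro hzero
    apply hq0
    have := congrArg (fun r => r.coeff n) hzero
    simp only [finset_sum_coeff, coeff_C_mul, coeff_X_pow, Polynomial.coeff_zero] at this
    rw [Finset.sum_eq_single 0] at this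
    · simpa using this
    · intro i hi hne
      have hi' : i ≤ n := Nat.lt_succ_iff.1 (Finset.mem_range.1 hi)
      have hni : n - i ≠ n := by omega
      simp only [if_neg (Ne.symm hni), mul_zero]
    · simp
  · have hsum : (aeval x⁻¹ (∑ i ∈ Finset.range (n + 1), C (q.coeff i) * X ^ (n - i))) * x ^ n
        = aeval x q := by
      rw [map_sum, Finset.sum_mul]
      rw [aeval_eq_sum_range]
      rw [← hn]
      apply Finset.sum_congr rfl
      intro i hi
      have hi' : i ≤ n := Nat.lt_succ_iff.1 (Finset.mem_range.1 hi)
      rw [map_mul, aeval_C, map_pow, aeval_X, Algebra.smul_def]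
      rw [mul_assoc]
      congr 1
      rw [inv_pow, show x ^ n = x ^ (n - i) * x ^ i by rw [← pow_add]; congr 1; omega]
      exact inv_mul_cancel_left₀ (pow_ne_zero _ hx) _
    rw [hqe] at hsum
    exact (mul_eq_zero.1 hsum).resolve_right (pow_ne_zero _ hx)

/-- The inverse of a nonzero algebraic element of a subalgebra lies in the subalgebra. -/
private lemma inv_mem_of_isAlgebraic {A : Subalgebra (Subring.center D) D} {x : D}
    (hxA : x ∈ A) (hx : x ≠ 0) (h : IsAlgebraic (Subring.center D) x) :
    x⁻¹ ∈ A := by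
  obtain ⟨p, hp0, hpe⟩ := h
  obtain ⟨q, hq0, hqe⟩ := exists_coeff_zero_ne_zero hx p.natDegree p le_rfl hp0 hpe
  have hkey : x * aeval x q.divX + algebraMap (Subring.center D) D (q.coeff 0) = 0 := by
    have := congrArg (aeval x) (X_mul_divX_add q)
    rw [hqe] at this
    rw [← this, map_add, map_mul, aeval_X, aeval_C]
  have hinv : x⁻¹ = aeval x q.divX * algebraMap (Subring.center D) D (-(q.coeff 0))⁻¹ := by
    apply inv_eq_of_mul_eq_one_right
    rw [← mul_assoc]
    have hxr : x * aeval x q.divX = algebraMap (Subring.center D) D (-(q.coeff 0)) := by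
      rw [(algebraMap (Subring.center D) D).map_neg]
      exact eq_neg_of_add_eq_zero_left hkey
    rw [hxr, ← map_mul, mul_inv_cancel₀ (neg_ne_zero.2 hq0), map_one]
  rw [hinv]
  exact mul_mem
    (Algebra.adjoin_le (Set.singleton_subset_iff.2 hxA) (aeval_mem_adjoin_singleton _ x))
    (A.algebraMap_mem _)

end Aux2

section Aux3

variable {D : Type*} [DivisionRing D]

/-- If `b` is transcendental over the (uncountable) center and `d ≠ 0`, the family
`c ↦ d * (b - c)⁻¹` indexed by the center is linearly independent. -/
private lemma linearIndependent_shifted_inv {b d : D}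
    (hb : ¬ IsAlgebraic (Subring.center D) b) (hd : d ≠ 0) :
    LinearIndependent (Subring.center D)
      (fun c : Subring.center D => d * (b - algebraMap (Subring.center D) D c)⁻¹) := by
  classical
  have H : ∀ p : (Subring.center D)[X], aeval b p = 0 → p = 0 := by
    intro p hp
    by_contra h0
    exact hb ⟨p, h0, hp⟩
  have hnz : ∀ c : Subring.center D, b - algebraMap (Subring.center D) D c ≠ 0 := by
    intro c hc
    have h1 : aeval b (X - C c) = 0 := by simpa using hc
    exact X_sub_C_ne_zero c (H _ h1)
  rw [linearIndependent_iff']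
  intro s g hsum i hi
  -- remove the factor d on the left
  have hsum' : ∑ j ∈ s, g j • (b - algebraMap (Subring.center D) D j)⁻¹ = 0 := by
    have h2 := congrArg (fun z => d⁻¹ * z) hsum
    simp only [Finset.mul_sum, mul_zero] at h2
    rw [← h2]
    apply Finset.sum_congr rfl
    intro j hj
    rw [mul_smul_comm, inv_mul_cancel_left₀ hd]
  -- multiply on the right by `aeval b Q` with `Q = ∏ (X - C j)`
  set Q : (Subring.center D)[X] := ∏ j ∈ s, (X - C j) with hQdef
  have key : ∀ j ∈ s, (b - algebraMap (Subring.center D) D j)⁻¹ * aeval b Q =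
      aeval b (∏ k ∈ s.erase j, (X - C k)) := by
    intro j hj
    have hQ : Q = (∏ k ∈ s.erase j, (X - C k)) * (X - C j) :=
      (Finset.prod_erase_mul s _ hj).symm
    have hcomm : (b - algebraMap (Subring.center D) D j) *
        aeval b (∏ k ∈ s.erase j, (X - C k)) =
        aeval b (∏ k ∈ s.erase j, (X - C k)) * (b - algebraMap (Subring.center D) D j) := by
      have h3 := congrArg (aeval b)
        (mul_comm (X - C j) (∏ k ∈ s.erase j, (X - C k)))
      simpa [map_mul] using h3
    rw [hQ, map_mul]
    have h4 : (aeval b) (X - C j) = b - algebraMap (Subring.center D) D j := by simp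
    rw [h4, ← hcomm, inv_mul_cancel_left₀ (hnz j)]
  have hsum'' : ∑ j ∈ s, g j • aeval b (∏ k ∈ s.erase j, (X - C k)) = 0 := by
    have h5 : (∑ j ∈ s, g j • (b - algebraMap (Subring.center D) D j)⁻¹) * aeval b Q = 0 := by
      rw [hsum', zero_mul]
    rw [Finset.sum_mul] at h5
    rw [← h5]
    apply Finset.sum_congr rfl
    intro j hj
    rw [smul_mul_assoc, key j hj]
  set P : (Subring.center D)[X] := ∑ j ∈ s, C (g j) * ∏ k ∈ s.erase j, (X - C k) with hPdef
  have hPb : aeval b P = 0 := by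
    rw [hPdef, map_sum, ← hsum'']
    apply Finset.sum_congr rfl
    intro j hj
    rw [map_mul, aeval_C, Algebra.smul_def]
  have hP : P = 0 := H P hPb
  have heval := congrArg (Polynomial.eval i) hP
  rw [hPdef] at heval
  simp only [eval_finset_sum, eval_mul, eval_C, eval_prod, eval_sub, eval_X, eval_zero] at heval
  rw [Finset.sum_eq_single i] at heval
  · have hprod : (∏ k ∈ s.erase i, (i - k)) ≠ 0 := by
      rw [Finset.prod_ne_zero_iff]
      intro k hk
      exact sub_ne_zero_of_ne (Ne.symm (Finset.ne_of_mem_erase hk))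
    exact (mul_eq_zero.1 heval).resolve_right hprod
  · intro j hj hne
    have : (∏ k ∈ s.erase j, ((i : Subring.center D) - k)) = 0 :=
      Finset.prod_eq_zero (Finset.mem_erase.2 ⟨hne.symm, hi⟩) (sub_self i)
    rw [this, mul_zero]
  · intro h
    exact absurd hi h

end Aux3

section Aux4

variable {D : Type*} [DivisionRing D]

/-- If `a` is not central, then some element of a noncentral normal subgroup `N` of `Dˣ`
fails to commute with `a`. -/
private lemma exists_not_commute {N : Subgroup Dˣ} (hNnorm : N.Normal)
    (hN : ∃ u ∈ N, (u : D) ∉ Subring.center D)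
    {a : D} (ha : a ∉ Subring.center D) :
    ∃ u ∈ N, (u : D) * a ≠ a * (u : D) := by
  classical
  by_contra hcon
  push_neg at hcon
  obtain ⟨w, hwN, hw⟩ := hN
  -- every conjugate z⁻¹ a z commutes with w
  have hconj : ∀ z : Dˣ, (w : D) * ((↑z⁻¹ : D) * a * (z : D)) =
      ((↑z⁻¹ : D) * a * (z : D)) * (w : D) := by
    intro z
    have hmem : z * w * z⁻¹ ∈ N := hNnorm.conj_mem w hwN z
    have h1 : ((z * w * z⁻¹ : Dˣ) : D) * a = a * ((z * w * z⁻¹ : Dˣ) : D) := hcon _ hmem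
    simp only [Units.val_mul] at h1
    have h2 := congrArg (fun t => (↑z⁻¹ : D) * t * (z : D)) h1
    calc (w : D) * ((↑z⁻¹ : D) * a * (z : D))
        = (↑z⁻¹ : D) * ((z : D) * (w : D) * (↑z⁻¹ : D) * a) * (z : D) := by
          simp only [mul_assoc, Units.inv_mul_cancel_left]
      _ = (↑z⁻¹ : D) * (a * ((z : D) * (w : D) * (↑z⁻¹ : D))) * (z : D) := by rw [h1]
      _ = ((↑z⁻¹ : D) * a * (z : D)) * (w : D) := by
          simp only [mul_assoc, Units.inv_mul_cancel_left, Units.inv_mul, mul_one]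
  have haw : (w : D) * a = a * (w : D) := hcon w hwN
  obtain ⟨y, hy⟩ : ∃ y : D, ¬ (y * a = a * y) := by
    by_contra h
    push_neg at h
    exact ha (Subring.mem_center_iff.2 fun g => h g)
  have main : ∀ x : D, x * a ≠ a * x → x * (w : D) = (w : D) * x := by
    intro x hx
    have hx0 : x ≠ 0 := by
      intro h; exact hx (by rw [h, zero_mul, mul_zero])
    have h1x : (1 : D) + x ≠ 0 := by
      intro h
      have hxm : x = -1 := by
        have := congrArg (fun t => t - 1) h
        simpa using this
      exact hx (by rw [hxm]; simp)
    set xu : Dˣ := Units.mk0 x hx0 with hxu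
    set vu : Dˣ := Units.mk0 ((1 : D) + x) h1x with hvu
    have hval_xu : (xu : D) = x := rfl
    have hval_vu : (vu : D) = (1 : D) + x := rfl
    have hinv_xu : ((↑xu⁻¹ : D)) = x⁻¹ := by
      rw [Units.val_inv_eq_inv_val, hval_xu]
    have hinv_vu : ((↑vu⁻¹ : D)) = ((1 : D) + x)⁻¹ := by
      rw [Units.val_inv_eq_inv_val, hval_vu]
    set a₁ : D := x⁻¹ * a * x with ha₁
    set a₂ : D := ((1 : D) + x)⁻¹ * a * ((1 : D) + x) with ha₂
    have hwa₁ : (w : D) * a₁ = a₁ * (w : D) := by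
      have := hconj xu
      rwa [hinv_xu, hval_xu] at this
    have hwa₂ : (w : D) * a₂ = a₂ * (w : D) := by
      have := hconj vu
      rwa [hinv_vu, hval_vu] at this
    -- the key identity : a - a₂ = x * (a₂ - a₁)
    have hxa₁ : x * a₁ = a * x := by
      rw [ha₁, ← mul_assoc, ← mul_assoc, mul_inv_cancel₀ hx0, one_mul]
    have hva₂ : ((1 : D) + x) * a₂ = a * ((1 : D) + x) := by
      rw [ha₂, ← mul_assoc, ← mul_assoc, mul_inv_cancel₀ h1x, one_mul]
    have hiden : a - a₂ = x * (a₂ - a₁) := by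
      have h6 : a₂ + x * a₂ = a + a * x := by
        have h7 := hva₂
        rw [add_mul, one_mul, mul_add, mul_one] at h7
        exact h7
      rw [mul_sub, hxa₁, sub_eq_sub_iff_add_eq_add, add_comm (x * a₂)]
      exact h6.symm
    by_cases h12 : a₂ - a₁ = 0
    · exfalso
      have ha2a1 : a₂ = a₁ := sub_eq_zero.1 h12
      have haa₂ : a = a₂ := by
        have h7 := hiden
        rw [h12, mul_zero, sub_eq_zero] at h7
        exact h7
      have haa₁ : a₁ = a := (haa₂.trans ha2a1).symm
      apply hx
      calc x * a = x * a₁ := by rw [haa₁]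
        _ = a * x := hxa₁
    · have hxval : x = (a - a₂) * (a₂ - a₁)⁻¹ := by
        rw [hiden, mul_assoc, mul_inv_cancel₀ h12, mul_one]
      have c1 : Commute (w : D) a := haw
      have c2 : Commute (w : D) a₁ := hwa₁
      have c3 : Commute (w : D) a₂ := hwa₂
      have c4 : Commute (w : D) ((a - a₂) * (a₂ - a₁)⁻¹) :=
        ((c1.sub_right c3).mul_right ((c3.sub_right c2).inv_right₀))
      rw [hxval]
      exact c4.eq.symm
  -- conclude : w is central, contradiction
  apply hw
  apply Subring.mem_center_iff.2
  intro x
  by_cases hxa : x * a = a * x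
  · have hxy : (x + y) * a ≠ a * (x + y) := by
      intro h
      apply hy
      rw [add_mul, mul_add, hxa] at h
      exact add_left_cancel h
    have h3 : x * (w : D) + y * (w : D) = (w : D) * x + (w : D) * y := by
      have h1 := main (x + y) hxy
      rw [add_mul, mul_add] at h1
      exact h1
    have h2 : y * (w : D) = (w : D) * y := main y hy
    calc x * (w : D) = (x * (w : D) + y * (w : D)) - y * (w : D) := by
          rw [add_sub_cancel_right]
      _ = ((w : D) * x + (w : D) * y) - (w : D) * y := by rw [h3, h2]
      _ = (w : D) * x := by rw [add_sub_cancel_right]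
  · exact main x hxa

end Aux4

section Aux5

variable {D : Type*} [DivisionRing D]

/-- The submodule underlying `Algebra.adjoin` of a countable set has countable rank. -/
private lemma rank_adjoin_le_aleph0 (s : Set D) (hs : s.Countable) :
    Module.rank (Subring.center D)
      (Subalgebra.toSubmodule (Algebra.adjoin (Subring.center D) s)) ≤ Cardinal.aleph0 := by
  classical
  have hspan := Algebra.adjoin_eq_span (R := Subring.center D) (s := s)
  rw [hspan]
  refine (rank_span_le _).trans ?_
  apply Set.Countable.le_aleph0
  -- the submonoid closure of a countable set is countable
  have : Countable s := hs.to_subtype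
  have hsubset : ((Submonoid.closure s : Submonoid D) : Set D) ⊆
      Set.range (fun l : List s => (l.map Subtype.val).prod) := by
    intro x hx
    obtain ⟨l, hl, rfl⟩ := Submonoid.exists_list_of_mem_closure hx
    refine ⟨(l.attach.map fun y => (⟨y.1, hl y.1 y.2⟩ : s)), ?_⟩
    simp only [List.map_map]
    congr 1
    calc l.attach.map (Subtype.val ∘ fun y => (⟨y.1, hl y.1 y.2⟩ : s))
        = l.attach.map Subtype.val := by
          apply List.map_congr_left
          intro y _
          rfl
      _ = l := List.attach_map_subtype_val l
  exact (Set.countable_range _).mono hsubset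

end Aux5


/-- Let `D` be a division ring whose center `F` is uncountable, and `N` a non-central
normal subgroup of `Dˣ`.  If every element of `N` is algebraic over `F`, then every
element of `D` is algebraic over `F`. -/
theorem algebraic_of_normalSubgroup_algebraic
    {D : Type*} [DivisionRing D] [Uncountable (Subring.center D)]
    (N : Subgroup Dˣ) (hNnorm : N.Normal)
    (hN : ∃ u ∈ N, (u : D) ∉ Subring.center D)
    (halg : ∀ u ∈ N, IsAlgebraic (Subring.center D) (u : D)) :
    ∀ a : D, IsAlgebraic (Subring.center D) a := by
  classical
  intro a
  by_contra ha
  have haF : a ∉ Subring.center D := by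
    intro h
    exact ha (isAlgebraic_algebraMap (⟨a, h⟩ : Subring.center D))
  obtain ⟨u, huN, hu⟩ := exists_not_commute hNnorm hN haF
  set b : D := (u : D) * a * (↑u⁻¹ : D) with hbdef
  have hbne : b ≠ a := by
    intro h
    apply hu
    have h2 := congrArg (fun t => t * (u : D)) h
    simp only [hbdef, mul_assoc, Units.inv_mul, mul_one] at h2
    exact h2
  have hbalg : ¬ IsAlgebraic (Subring.center D) b := by
    intro h
    exact ha (isAlgebraic_of_conj u h)
  set d : D := a - b with hddef
  have hd : d ≠ 0 := sub_ne_zero_of_ne (Ne.symm hbne)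
  set A := Algebra.adjoin (Subring.center D) ({b * d⁻¹, d⁻¹} : Set D) with hAdef
  have key : ∀ c : Subring.center D,
      d * (b - algebraMap (Subring.center D) D c)⁻¹ ∈ A := by
    intro c
    have hbc : b - algebraMap (Subring.center D) D c ≠ 0 := by
      intro h
      apply hbalg
      have hb' : b = algebraMap (Subring.center D) D c := by rwa [sub_eq_zero] at h
      rw [hb']
      exact isAlgebraic_algebraMap c
    have hac : a - algebraMap (Subring.center D) D c ≠ 0 := by
      intro h
      apply ha
      have ha' : a = algebraMap (Subring.center D) D c := by rwa [sub_eq_zero] at h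
      rw [ha']
      exact isAlgebraic_algebraMap c
    set α : Dˣ := Units.mk0 _ hac with hα
    have hαval : (α : D) = a - algebraMap (Subring.center D) D c := rfl
    have hαinv : ((↑α⁻¹ : D)) = (a - algebraMap (Subring.center D) D c)⁻¹ := by
      rw [Units.val_inv_eq_inv_val, hαval]
    have hwN : α * u * α⁻¹ * u⁻¹ ∈ N :=
      N.mul_mem (hNnorm.conj_mem u huN α) (N.inv_mem huN)
    have hwalg := halg _ hwN
    -- compute the value of the commutator
    have hcc : (u : D) * algebraMap (Subring.center D) D c =
        algebraMap (Subring.center D) D c * (u : D) :=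
      (Subring.mem_center_iff.1 c.2 (u : D))
    have e1 : (u : D) * (a - algebraMap (Subring.center D) D c) * (↑u⁻¹ : D) =
        b - algebraMap (Subring.center D) D c := by
      rw [mul_sub, sub_mul, hbdef]
      congr 1
      rw [hcc, mul_assoc, Units.mul_inv, mul_one]
    have e2 : (u : D) * (a - algebraMap (Subring.center D) D c)⁻¹ * (↑u⁻¹ : D) =
        (b - algebraMap (Subring.center D) D c)⁻¹ := by
      apply eq_inv_of_mul_eq_one_left
      rw [← e1]
      calc (u : D) * (a - algebraMap (Subring.center D) D c)⁻¹ * (↑u⁻¹ : D) *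
            ((u : D) * (a - algebraMap (Subring.center D) D c) * (↑u⁻¹ : D))
          = (u : D) * ((a - algebraMap (Subring.center D) D c)⁻¹ *
              (a - algebraMap (Subring.center D) D c)) * (↑u⁻¹ : D) := by
            simp only [mul_assoc, Units.inv_mul_cancel_left]
        _ = 1 := by rw [inv_mul_cancel₀ hac, mul_one, Units.mul_inv]
    have w_val : ((α * u * α⁻¹ * u⁻¹ : Dˣ) : D) =
        (a - algebraMap (Subring.center D) D c) *
          (b - algebraMap (Subring.center D) D c)⁻¹ := by
      simp only [Units.val_mul]
      rw [hαval, hαinv, ← e2]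
      simp only [mul_assoc]
    have tsub : ((α * u * α⁻¹ * u⁻¹ : Dˣ) : D) - 1 =
        d * (b - algebraMap (Subring.center D) D c)⁻¹ := by
      rw [w_val, hddef]
      have h1 : (1 : D) = (b - algebraMap (Subring.center D) D c) *
          (b - algebraMap (Subring.center D) D c)⁻¹ := (mul_inv_cancel₀ hbc).symm
      rw [h1, ← sub_mul, sub_sub_sub_cancel_right]
    -- the chain of algebraicity
    have ht : IsAlgebraic (Subring.center D)
        (d * (b - algebraMap (Subring.center D) D c)⁻¹) := by
      rw [← tsub]
      have h2 := isAlgebraic_add_central (-1) hwalg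
      have h3 : algebraMap (Subring.center D) D (-1) = -1 := by
        rw [(algebraMap (Subring.center D) D).map_neg, map_one]
      rw [h3, ← sub_eq_add_neg] at h2
      exact h2
    have ht0 : d * (b - algebraMap (Subring.center D) D c)⁻¹ ≠ 0 :=
      mul_ne_zero hd (inv_ne_zero hbc)
    have hxval : (d * (b - algebraMap (Subring.center D) D c)⁻¹)⁻¹ =
        (b - algebraMap (Subring.center D) D c) * d⁻¹ := by
      rw [mul_inv_rev, inv_inv]
    have hxalg : IsAlgebraic (Subring.center D)
        ((b - algebraMap (Subring.center D) D c) * d⁻¹) := by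
      rw [← hxval]
      exact isAlgebraic_inv ht0 ht
    have hxA : (b - algebraMap (Subring.center D) D c) * d⁻¹ ∈ A := by
      rw [sub_mul]
      apply sub_mem
      · exact Algebra.subset_adjoin (Set.mem_insert _ _)
      · have hmem : d⁻¹ ∈ A :=
          Algebra.subset_adjoin (Set.mem_insert_of_mem _ (Set.mem_singleton _))
        have := A.smul_mem hmem c
        rwa [Algebra.smul_def] at this
    have hx0 : (b - algebraMap (Subring.center D) D c) * d⁻¹ ≠ 0 :=
      mul_ne_zero hbc (inv_ne_zero hd)
    have hfinal := inv_mem_of_isAlgebraic hxA hx0 hxalg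
    rwa [mul_inv_rev, inv_inv] at hfinal
  -- linear independence gives a cardinality contradiction
  have li := linearIndependent_shifted_inv hbalg hd
  set M := Subalgebra.toSubmodule A with hM
  have livA : LinearIndependent (Subring.center D) (fun c : Subring.center D =>
      (⟨d * (b - algebraMap (Subring.center D) D c)⁻¹, key c⟩ : M)) := by
    apply LinearIndependent.of_comp M.subtype
    exact li
  have h1 : Cardinal.mk (Subring.center D) ≤ Module.rank (Subring.center D) M :=
    livA.cardinal_le_rank
  have h2 : Module.rank (Subring.center D) M ≤ Cardinal.aleph0 :=
    rank_adjoin_le_aleph0 _ (((Set.countable_singleton _).insert _))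
  have h3 := Cardinal.mk_le_aleph0_iff.1 (h1.trans h2)
  exact not_uncountable_iff.2 h3 inferInstance
end

section
/- Let D be a division ring with center F, let K be a division subring of D containing F, let N be a non-central normal subgroup of D* all of whose elements are left algebraic over K, and let a ∈ D with a ∉ C_D(N). Choose b ∈ N with d = ba − ab ≠ 0. Then for every α ∈ F, the element (a + α)^{-1} (when a + α ≠ 0) lies in the left K-subspace of D spanned by the subgroup ⟨a, b, d⟩ of D* generated by a, b, and d. -/
/-- Let `D` be a division ring with center `F`, `K` a division subring containing `F`,
`N` a non-central normal subgroup of `Dˣ` all of whose elements are left algebraic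
over `K`, and `a ∈ D` with `a ∉ C_D(N)`.  Pick `b ∈ N` with `d = ba - ab ≠ 0`.  Then for
every central `α` with `a + α ≠ 0`, the element `(a + α)⁻¹` lies in the left `K`-subspace
of `D` spanned by the subgroup of `Dˣ` generated by `a`, `b` and `d` (realized as the
multiplicative closure of these elements and their inverses). -/
theorem inv_mem_span_of_leftAlgebraic_normalSubgroup
    {D : Type*} [DivisionRing D]
    (K : Subring D) (hKinv : ∀ x ∈ K, x⁻¹ ∈ K) (hFK : Subring.center D ≤ K)
    (N : Subgroup Dˣ) (hNnorm : N.Normal)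
    (hN : ∃ u ∈ N, (u : D) ∉ Subring.center D)
    (hNalg : ∀ u ∈ N, IsLeftAlgebraicOver K (u : D))
    (a : D) (ha : ¬ ∀ u ∈ N, a * (u : D) = (u : D) * a)
    (b : Dˣ) (hb : b ∈ N) (hd : (b : D) * a - a * (b : D) ≠ 0)
    (α : D) (hα : α ∈ Subring.center D) (hne : a + α ≠ 0) :
    (a + α)⁻¹ ∈ Submodule.span K
      ((Submonoid.closure
        {a, a⁻¹, (b : D), ((b : D))⁻¹,
          (b : D) * a - a * (b : D), ((b : D) * a - a * (b : D))⁻¹} : Submonoid D) :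
        Set D) := by
  classical
  set dd : D := (b : D) * a - a * (b : D) with hdd
  set y : D := a + α with hy
  set S : Set D := {a, a⁻¹, (b : D), ((b : D))⁻¹, dd, dd⁻¹} with hS
  set M : Submonoid D := Submonoid.closure S with hM
  -- basic nonvanishing
  have hb0 : (b : D) ≠ 0 := Units.ne_zero b
  have hy0 : y ≠ 0 := hne
  have hd0 : dd ≠ 0 := hd
  have hαK : α ∈ K := hFK hα
  have hαc : ∀ g : D, g * α = α * g := fun g => Subring.mem_center_iff.mp hα g
  -- generators
  have haM : a ∈ M := Submonoid.subset_closure (by rw [hS]; simp)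
  have hbM : (b : D) ∈ M := Submonoid.subset_closure (by rw [hS]; simp)
  have hbiM : ((b : D))⁻¹ ∈ M := Submonoid.subset_closure (by rw [hS]; simp)
  have hdM : dd ∈ M := Submonoid.subset_closure (by rw [hS]; simp)
  have hdiM : dd⁻¹ ∈ M := Submonoid.subset_closure (by rw [hS]; simp)
  -- the span is stable under right multiplication by elements of M
  have hPmul : ∀ p ∈ Submodule.span K (M : Set D), ∀ w ∈ M,
      p * w ∈ Submodule.span K (M : Set D) := by
    intro p hp w hw
    induction hp using Submodule.span_induction with
    | mem t ht => exact Submodule.subset_span (M.mul_mem ht hw)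
    | zero => simp
    | add u v hu hv hu' hv' => rw [add_mul]; exact Submodule.add_mem _ hu' hv'
    | smul k u hu hu' => rw [smul_mul_assoc]; exact Submodule.smul_mem _ k hu'
  have hPK : ∀ k ∈ K, ∀ p ∈ Submodule.span K (M : Set D),
      k * p ∈ Submodule.span K (M : Set D) := by
    intro k hk p hp
    exact (Submodule.span K (M : Set D)).smul_mem ⟨k, hk⟩ hp
  have h1P : (1 : D) ∈ Submodule.span K (M : Set D) :=
    Submodule.subset_span (one_mem M)
  have hKP : ∀ k ∈ K, k ∈ Submodule.span K (M : Set D) := by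
    intro k hk
    simpa using hPK k hk 1 h1P
  -- stability under right multiplication by y
  have hPy : ∀ p ∈ Submodule.span K (M : Set D), p * y ∈ Submodule.span K (M : Set D) := by
    intro p hp
    have h1 : p * y = p * a + α * p := by rw [hy, mul_add, hαc p]
    rw [h1]
    exact Submodule.add_mem _ (hPmul p hp a haM) (hPK α hαK p hp)
  -- the element χ
  set x : D := y⁻¹ with hx
  have hx0 : x ≠ 0 := inv_ne_zero hy0
  set c : D := x * dd * ((b : D))⁻¹ with hc
  have hc0 : c ≠ 0 := mul_ne_zero (mul_ne_zero hx0 hd0) (inv_ne_zero hb0)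
  have hcinv : c⁻¹ = (b : D) * dd⁻¹ * y := by
    rw [hc, mul_inv_rev, mul_inv_rev, inv_inv, inv_inv]
    exact (mul_assoc _ _ _).symm
  -- stability under right multiplication by c⁻¹
  have hPcinv : ∀ p ∈ Submodule.span K (M : Set D),
      p * c⁻¹ ∈ Submodule.span K (M : Set D) := by
    intro p hp
    rw [hcinv, ← mul_assoc, ← mul_assoc]
    exact hPy _ (hPmul _ (hPmul p hp _ hbM) _ hdiM)
  -- the unit g = y⁻¹ b y b⁻¹ lies in N, and g = 1 + c
  have hyu : ∃ yu : Dˣ, (yu : D) = y := ⟨Units.mk0 y hy0, rfl⟩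
  obtain ⟨yu, hyuv⟩ := hyu
  set g : Dˣ := yu⁻¹ * b * yu * b⁻¹ with hg
  have hgN : g ∈ N := by
    have h1 : yu⁻¹ * b * (yu⁻¹)⁻¹ ∈ N := hNnorm.conj_mem b hb yu⁻¹
    rw [inv_inv] at h1
    exact N.mul_mem h1 (N.inv_mem hb)
  have hby : (b : D) * y = y * (b : D) + dd := by
    rw [hy, hdd, mul_add, add_mul, hαc (b : D)]
    abel
  have hgv : (g : D) = 1 + c := by
    have h1 : (g : D) = y⁻¹ * (b : D) * y * ((b : D))⁻¹ := by
      rw [hg]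
      simp [Units.val_mul, hyuv]
    rw [h1, hc, hx]
    rw [mul_assoc y⁻¹ (b : D) y, hby, mul_add, ← mul_assoc, inv_mul_cancel₀ hy0, one_mul,
      add_mul, mul_inv_cancel₀ hb0]
  -- left algebraicity of g
  obtain ⟨m, γ, hγK, ⟨i₀, hi₀m, hi₀⟩, hsum⟩ := hNalg g hgN
  rw [hgv] at hsum
  have hsum' : ∑ i ∈ Finset.range (m + 1), γ i * (c + 1) ^ i = 0 := by
    rw [show c + 1 = 1 + c from add_comm c 1]
    exact hsum
  -- binomial re-expansion
  set μ : ℕ → D := fun k => ∑ i ∈ Finset.range (m + 1), ((i.choose k : ℕ) : D) * γ i with hμ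
  have hμK : ∀ k, μ k ∈ K := by
    intro k
    exact Subring.sum_mem K fun i _ => K.mul_mem (natCast_mem K _) (hγK i)
  have per_i : ∀ i ∈ Finset.range (m + 1),
      γ i * (c + 1) ^ i
        = ∑ k ∈ Finset.range (m + 1), (((i.choose k : ℕ) : D) * γ i) * c ^ k := by
    intro i hi
    have him : i + 1 ≤ m + 1 := by
      have := Finset.mem_range.mp hi; omega
    rw [Commute.add_pow (Commute.one_right c) i, Finset.mul_sum]
    have hterm : ∀ k, γ i * (c ^ k * (1 : D) ^ (i - k) * ((i.choose k : ℕ) : D))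
        = (((i.choose k : ℕ) : D) * γ i) * c ^ k := by
      intro k
      rw [one_pow, mul_one, ← (Nat.cast_commute (i.choose k) (c ^ k)).eq, ← mul_assoc,
        ← (Nat.cast_commute (i.choose k) (γ i)).eq]
    calc ∑ k ∈ Finset.range (i + 1), γ i * (c ^ k * (1 : D) ^ (i - k) * ((i.choose k : ℕ) : D))
        = ∑ k ∈ Finset.range (i + 1), (((i.choose k : ℕ) : D) * γ i) * c ^ k :=
          Finset.sum_congr rfl fun k _ => hterm k
      _ = ∑ k ∈ Finset.range (m + 1), (((i.choose k : ℕ) : D) * γ i) * c ^ k := by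
          apply Finset.sum_subset (Finset.range_subset_range.mpr him)
          intro k hk hk'
          have hik : i < k := by
            have h1 := Finset.mem_range.mp hk
            have h2 : ¬ k < i + 1 := fun hcon => hk' (Finset.mem_range.mpr hcon)
            omega
          rw [Nat.choose_eq_zero_of_lt hik]
          simp
  have key : ∑ k ∈ Finset.range (m + 1), μ k * c ^ k = 0 := by
    calc ∑ k ∈ Finset.range (m + 1), μ k * c ^ k
        = ∑ k ∈ Finset.range (m + 1), ∑ i ∈ Finset.range (m + 1),
            (((i.choose k : ℕ) : D) * γ i) * c ^ k := by
          refine Finset.sum_congr rfl fun k _ => ?_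
          rw [hμ]
          rw [Finset.sum_mul]
      _ = ∑ i ∈ Finset.range (m + 1), ∑ k ∈ Finset.range (m + 1),
            (((i.choose k : ℕ) : D) * γ i) * c ^ k := Finset.sum_comm
      _ = ∑ i ∈ Finset.range (m + 1), γ i * (c + 1) ^ i :=
          Finset.sum_congr rfl fun i hi => (per_i i hi).symm
      _ = 0 := hsum'
  -- some μ is nonzero
  have hμex : ∃ k, k ∈ Finset.range (m + 1) ∧ μ k ≠ 0 := by
    by_contra hcon
    push_neg at hcon
    have hγ0 : ∀ t i, i ≤ m → m ≤ i + t → γ i = 0 := by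
      intro t
      induction t with
      | zero =>
        intro i him hmi
        have hieq : i = m := by omega
        have hsing : μ i = ((i.choose i : ℕ) : D) * γ i := by
          apply Finset.sum_eq_single_of_mem i (Finset.mem_range.mpr (by omega))
          intro j hj hji
          have hjm := Finset.mem_range.mp hj
          have : j < i := by omega
          rw [Nat.choose_eq_zero_of_lt this]
          simp
        have h0 : μ i = 0 := hcon i (Finset.mem_range.mpr (by omega))
        rw [h0, Nat.choose_self] at hsing
        simpa using hsing.symm
      | succ t ih =>
        intro i him hmi
        by_cases hcase : m ≤ i + t
        · exact ih i him hcase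
        · have hsing : μ i = ((i.choose i : ℕ) : D) * γ i := by
            apply Finset.sum_eq_single_of_mem i (Finset.mem_range.mpr (by omega))
            intro j hj hji
            have hjm := Finset.mem_range.mp hj
            rcases lt_or_gt_of_ne hji with hlt | hgt
            · rw [Nat.choose_eq_zero_of_lt hlt]
              simp
            · have : γ j = 0 := ih j (by omega) (by omega)
              rw [this, mul_zero]
          have h0 : μ i = 0 := hcon i (Finset.mem_range.mpr (by omega))
          rw [h0, Nat.choose_self] at hsing
          simpa using hsing.symm
    exact hi₀ (hγ0 m i₀ hi₀m (by omega))
  -- extract the top nonzero coefficient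
  obtain ⟨k₀, hk₀mem, hk₀ne⟩ := hμex
  have hTne : ((Finset.range (m + 1)).filter fun k => μ k ≠ 0).Nonempty :=
    ⟨k₀, Finset.mem_filter.mpr ⟨hk₀mem, hk₀ne⟩⟩
  set r₀ : ℕ := ((Finset.range (m + 1)).filter fun k => μ k ≠ 0).max' hTne with hr₀
  have hr₀mem := ((Finset.range (m + 1)).filter fun k => μ k ≠ 0).max'_mem hTne
  have hr₀ne : μ r₀ ≠ 0 := (Finset.mem_filter.mp hr₀mem).2
  have hr₀m : r₀ ≤ m := by
    have := Finset.mem_range.mp (Finset.mem_filter.mp hr₀mem).1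
    omega
  have hmax : ∀ k, k ≤ m → r₀ < k → μ k = 0 := by
    intro k hkm hrk
    by_contra hne'
    have hkT : k ∈ (Finset.range (m + 1)).filter fun k => μ k ≠ 0 :=
      Finset.mem_filter.mpr ⟨Finset.mem_range.mpr (by omega), hne'⟩
    have := Finset.le_max' _ k hkT
    omega
  have hZ : ∑ k ∈ Finset.range (r₀ + 1), μ k * c ^ k = 0 := by
    rw [← key]
    apply Finset.sum_subset (Finset.range_subset_range.mpr (by omega))
    intro k hk hk'
    have h1 := Finset.mem_range.mp hk
    have h2 : r₀ < k := by
      by_contra hcon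
      exact hk' (Finset.mem_range.mpr (by omega))
    rw [hmax k (by omega) h2, zero_mul]
  have hr₀pos : 1 ≤ r₀ := by
    by_contra hcon
    have hr00 : r₀ = 0 := by omega
    rw [hr00] at hZ
    simp at hZ
    exact hr₀ne (by rw [hr00]; exact hZ)
  -- descent
  have descent : ∀ (r : ℕ) (ν : ℕ → D), (∀ j, ν j ∈ K) → ν (r + 1) ≠ 0 →
      (∑ j ∈ Finset.range (r + 2), ν j * c ^ j) ∈ Submodule.span K (M : Set D) →
      c ∈ Submodule.span K (M : Set D) := by
    intro r
    induction r with
    | zero =>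
      intro ν hνK hν1 hsg
      have h2 : ∑ j ∈ Finset.range 2, ν j * c ^ j = ν 0 + ν 1 * c := by
        rw [Finset.sum_range_succ, Finset.sum_range_one]
        rw [pow_zero, pow_one, mul_one]
      rw [h2] at hsg
      have hν1c : ν 1 * c ∈ Submodule.span K (M : Set D) := by
        have := Submodule.sub_mem _ hsg (hKP (ν 0) (hνK 0))
        simpa using this
      have := hPK (ν 1)⁻¹ (hKinv _ (hνK 1)) _ hν1c
      rwa [← mul_assoc, inv_mul_cancel₀ hν1, one_mul] at this
    | succ r ih =>
      intro ν hνK hν1 hsg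
      have hsplit : ∑ j ∈ Finset.range (r + 1 + 2), ν j * c ^ j
          = (∑ j ∈ Finset.range (r + 2), ν (j + 1) * c ^ (j + 1)) + ν 0 := by
        rw [Finset.sum_range_succ']
        rw [pow_zero, mul_one]
      have hmem1 : (∑ j ∈ Finset.range (r + 2), ν (j + 1) * c ^ (j + 1))
          ∈ Submodule.span K (M : Set D) := by
        have := Submodule.sub_mem _ hsg (hKP (ν 0) (hνK 0))
        rw [hsplit] at this
        simpa using this
      have hmem2 : (∑ j ∈ Finset.range (r + 2), ν (j + 1) * c ^ j)
          ∈ Submodule.span K (M : Set D) := by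
        have h3 := hPcinv _ hmem1
        rw [Finset.sum_mul] at h3
        have h4 : ∀ j, (ν (j + 1) * c ^ (j + 1)) * c⁻¹ = ν (j + 1) * c ^ j := by
          intro j
          rw [mul_assoc, pow_succ, mul_assoc, mul_inv_cancel₀ hc0, mul_one]
        have h5 : ∑ j ∈ Finset.range (r + 2), ν (j + 1) * c ^ j
            = ∑ j ∈ Finset.range (r + 2), (ν (j + 1) * c ^ (j + 1)) * c⁻¹ :=
          Finset.sum_congr rfl fun j _ => (h4 j).symm
        rw [h5]
        exact h3
      exact ih (fun j => ν (j + 1)) (fun j => hνK (j + 1)) hν1 hmem2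
  obtain ⟨r₁, hr₁⟩ : ∃ r₁, r₀ = r₁ + 1 := ⟨r₀ - 1, by omega⟩
  have hcP : c ∈ Submodule.span K (M : Set D) := by
    apply descent r₁ μ hμK (by rw [← hr₁]; exact hr₀ne)
    have : r₁ + 2 = r₀ + 1 := by omega
    rw [this, hZ]
    simp
  -- conclude
  have hxeq : x = (c * (b : D)) * dd⁻¹ := by
    rw [hc, mul_assoc (x * dd), inv_mul_cancel₀ hb0, mul_one, mul_assoc,
      mul_inv_cancel₀ hd0, mul_one]
  rw [show y⁻¹ = x from hx.symm] at *
  rw [hxeq]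
  exact hPmul _ (hPmul _ hcP _ hbM) _ hdiM
end
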